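/- arXiv:1910.14445 — 4 statements merged into one kernel-verified Lean document; each statement's English description precedes it below -/
import Mathlib

section
/- Let n ≥ 2 and let (v, w) and (v′, w′) be two orthonormal pairs of vectors in ℝⁿ. Then the points [v + iw] and [v′ + iw′] of the complex projective space ℙ(ℂⁿ) coincide if and only if there exists θ ∈ ℝ such that v′ = cos θ · v − sin θ · w and w′ = sin θ · v + cos θ · w. In particular, if [v + iw] = [v′ + iw′] then span{v′, w′} = span{v, w}. -/
/-!
`[z] = [z']` means `z' = b • z` for some `b : ℂ`. Taking real and imaginary parts, this says
`v' = Re b • v - Im b • w` and `w' = Im b • v + Re b • w`; as `(v, w)` is orthonormal,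
`‖v'‖ = 1` then forces `|b| = 1`, i.e. `b = exp (θ * I)`, which is the rotation by `θ`.
-/

open Complex

section Rotation

variable {M : Type*} [AddCommGroup M] [Module ℝ M] {v w v' w' : M} {θ : ℝ}

theorem span_pair_le_of_rotation (h₁ : v' = Real.cos θ • v - Real.sin θ • w)
    (h₂ : w' = Real.sin θ • v + Real.cos θ • w) :
    Submodule.span ℝ {v', w'} ≤ Submodule.span ℝ {v, w} := by
  rw [Submodule.span_le, Set.insert_subset_iff, Set.singleton_subset_iff, h₁, h₂]
  exact ⟨Submodule.mem_span_pair.2 ⟨Real.cos θ, -Real.sin θ, by module⟩,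
    Submodule.mem_span_pair.2 ⟨_, _, rfl⟩⟩

theorem rotation_neg_of_rotation (h₁ : v' = Real.cos θ • v - Real.sin θ • w)
    (h₂ : w' = Real.sin θ • v + Real.cos θ • w) :
    v = Real.cos (-θ) • v' - Real.sin (-θ) • w' ∧ w = Real.sin (-θ) • v' + Real.cos (-θ) • w' := by
  rw [Real.cos_neg, Real.sin_neg]
  constructor
  · linear_combination (norm := module)
      -Real.cos θ • h₁ - Real.sin θ • h₂ - (Real.sin_sq_add_cos_sq θ) • v
  · linear_combination (norm := module)
      Real.sin θ • h₁ - Real.cos θ • h₂ - (Real.sin_sq_add_cos_sq θ) • w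

theorem span_pair_eq_of_rotation (h₁ : v' = Real.cos θ • v - Real.sin θ • w)
    (h₂ : w' = Real.sin θ • v + Real.cos θ • w) :
    Submodule.span ℝ {v', w'} = Submodule.span ℝ {v, w} :=
  let ⟨h₁', h₂'⟩ := rotation_neg_of_rotation h₁ h₂
  le_antisymm (span_pair_le_of_rotation h₁ h₂) (span_pair_le_of_rotation h₁' h₂')

end Rotation

theorem norm_smul_sub_smul_sq_of_orthonormal {E : Type*} [NormedAddCommGroup E]
    [InnerProductSpace ℝ E] {v w : E} (hvw : inner ℝ v w = (0 : ℝ)) (hv : ‖v‖ = 1)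
    (hw : ‖w‖ = 1) (a b : ℝ) : ‖a • v - b • w‖ ^ 2 = a ^ 2 + b ^ 2 := by
  rw [norm_sub_sq_real, norm_smul, norm_smul, real_inner_smul_left, real_inner_smul_right,
    hvw, hv, hw]
  simp [sq_abs]

section Complexification

variable {ι : Type*} {v w v' w' : EuclideanSpace ℝ ι} {z z' : ι → ℂ}

theorem smul_eq_iff_of_re_im (hz : ∀ j, z j = (v j : ℂ) + I * (w j : ℂ))
    (hz' : ∀ j, z' j = (v' j : ℂ) + I * (w' j : ℂ)) (b : ℂ) :
    b • z = z' ↔ v' = b.re • v - b.im • w ∧ w' = b.im • v + b.re • w := by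
  simp only [funext_iff, Pi.smul_apply, smul_eq_mul, hz, hz', Complex.ext_iff, forall_and]
  simp [eq_comm, PiLp.ext_iff, add_comm]

theorem exists_smul_eq_iff_exists_rotation [Fintype ι]
    (hvw : inner ℝ v w = (0 : ℝ)) (hv : ‖v‖ = 1) (hw : ‖w‖ = 1) (hv' : ‖v'‖ = 1)
    (hz : ∀ j, z j = (v j : ℂ) + I * (w j : ℂ)) (hz' : ∀ j, z' j = (v' j : ℂ) + I * (w' j : ℂ)) :
    (∃ b : ℂ, b • z = z') ↔
      ∃ θ : ℝ, v' = Real.cos θ • v - Real.sin θ • w ∧ w' = Real.sin θ • v + Real.cos θ • w := by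
  simp only [smul_eq_iff_of_re_im hz hz']
  constructor
  · rintro ⟨b, h₁, h₂⟩
    have hb : ‖b‖ = 1 := by
      have := norm_smul_sub_smul_sq_of_orthonormal hvw hv hw b.re b.im
      rw [← h₁, hv', ← Complex.normSq_add_mul_I, ← Complex.sq_norm, Complex.re_add_im] at this
      nlinarith [norm_nonneg b]
    obtain ⟨θ, rfl⟩ := (Complex.norm_eq_one_iff b).1 hb
    exact ⟨θ, by simpa only [exp_ofReal_mul_I_re, exp_ofReal_mul_I_im] using And.intro h₁ h₂⟩
  · rintro ⟨θ, h₁, h₂⟩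
    exact ⟨exp (θ * I),
      by simpa only [exp_ofReal_mul_I_re, exp_ofReal_mul_I_im] using And.intro h₁ h₂⟩

end Complexification

theorem stmt_1_general (n : ℕ) (v w v' w' : EuclideanSpace ℝ (Fin n))
    (hvw : inner ℝ v w = (0 : ℝ)) (hv : ‖v‖ = 1) (hw : ‖w‖ = 1)
    (hv' : ‖v'‖ = 1)
    (z z' : Fin n → ℂ)
    (hz : ∀ j, z j = (v j : ℂ) + Complex.I * (w j : ℂ))
    (hz' : ∀ j, z' j = (v' j : ℂ) + Complex.I * (w' j : ℂ))
    (hz0 : z ≠ 0) (hz'0 : z' ≠ 0) :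
    (Projectivization.mk ℂ z hz0 = Projectivization.mk ℂ z' hz'0 ↔
      ∃ θ : ℝ, v' = Real.cos θ • v - Real.sin θ • w ∧
               w' = Real.sin θ • v + Real.cos θ • w) ∧
    (Projectivization.mk ℂ z hz0 = Projectivization.mk ℂ z' hz'0 →
      Submodule.span ℝ {v', w'} = Submodule.span ℝ {v, w}) := by
  have key : Projectivization.mk ℂ z hz0 = Projectivization.mk ℂ z' hz'0 ↔
      ∃ θ : ℝ, v' = Real.cos θ • v - Real.sin θ • w ∧ w' = Real.sin θ • v + Real.cos θ • w := by
    rw [eq_comm, Projectivization.mk_eq_mk_iff']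
    exact exists_smul_eq_iff_exists_rotation hvw hv hw hv' hz hz'
  refine ⟨key, fun h => ?_⟩
  obtain ⟨θ, h₁, h₂⟩ := key.1 h
  exact span_pair_eq_of_rotation h₁ h₂

/-- Two orthonormal pairs `(v,w)` and `(v',w')` in `ℝⁿ` determine
the same point `[v + i w] = [v' + i w']` of complex projective space `ℙ(ℂⁿ)`
iff `(v',w')` is obtained from `(v,w)` by a rotation of angle `θ` in their common
plane; in particular equality of the projective points forces
`span{v',w'} = span{v,w}`. -/
theorem stmt_1 (n : ℕ) (hn : 2 ≤ n) (v w v' w' : EuclideanSpace ℝ (Fin n))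
    (hvw : inner ℝ v w = (0 : ℝ)) (hv : ‖v‖ = 1) (hw : ‖w‖ = 1)
    (hvw' : inner ℝ v' w' = (0 : ℝ)) (hv' : ‖v'‖ = 1) (hw' : ‖w'‖ = 1)
    (z z' : Fin n → ℂ)
    (hz : ∀ j, z j = (v j : ℂ) + Complex.I * (w j : ℂ))
    (hz' : ∀ j, z' j = (v' j : ℂ) + Complex.I * (w' j : ℂ))
    (hz0 : z ≠ 0) (hz'0 : z' ≠ 0) :
    (Projectivization.mk ℂ z hz0 = Projectivization.mk ℂ z' hz'0 ↔
      ∃ θ : ℝ, v' = Real.cos θ • v - Real.sin θ • w ∧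
               w' = Real.sin θ • v + Real.cos θ • w) ∧
    (Projectivization.mk ℂ z hz0 = Projectivization.mk ℂ z' hz'0 →
      Submodule.span ℝ {v', w'} = Submodule.span ℝ {v, w}) :=
  stmt_1_general n v w v' w' hvw hv hw hv' z z' hz hz' hz0 hz'0
end

section
/- For every k ≥ 1, the subspace {ξ ∈ ℂᵏ : ∑_{j=1}^k ξ_j² ≠ 0} of ℂᵏ (with the subspace topology) is not simply connected. -/
/-! If the set were simply connected, then, `exp : ℂ → ℂ ∖ {0}` being a covering map, the
nonvanishing function `ξ ↦ ∑ ξⱼ²` would have a continuous logarithm on it. Restricting to the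
line `ℂ e₁` would give a continuous logarithm of `z²` on `ℂ ∖ {0}`, which cannot exist because
`z²` winds twice around `0`. -/

open Complex Set

/- Both `t ↦ f (exp (t i))` and `t ↦ n t i + f 1` lift `t ↦ exp (n t i)` through `exp` and agree
at `t = 0`, so they agree at `t = 2π`, forcing `2π n i = 0`. -/
theorem Complex.not_exists_continuousOn_exp_eq_pow {n : ℕ} (hn : n ≠ 0) :
    ¬ ∃ f : ℂ → ℂ, ContinuousOn f {0}ᶜ ∧ ∀ z ≠ 0, exp (f z) = z ^ n := by
  rintro ⟨f, hfc, hf⟩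
  have hlifts : (fun t : ℝ ↦ f (exp (t * I))) = fun t : ℝ ↦ (n : ℂ) * t * I + f 1 := by
    refine isCoveringMap_exp.eq_of_comp_eq
      (hfc.comp_continuous (by fun_prop) fun t ↦ exp_ne_zero _) (by fun_prop) ?_ 0 (by simp)
    funext t
    ext
    simp only [Function.comp_apply, exp_add, hf _ (exp_ne_zero _), hf 1 one_ne_zero, one_pow,
      mul_one, ← exp_nat_mul]
    ring_nf
  have h2π := congrFun hlifts (2 * Real.pi)
  simp [exp_two_pi_mul_I, Real.pi_ne_zero, hn] at h2π

/-- For every `k ≥ 1`, the subspace `{ξ ∈ ℂᵏ : ∑ ξⱼ² ≠ 0}` of `ℂᵏ`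
(the image of `Q_k ∖ (H ∪ H')` under the Hoffman–Osserman biholomorphism) is not
simply connected. -/
theorem stmt_4 (k : ℕ) (hk : 1 ≤ k) :
    ¬ SimplyConnectedSpace {ξ : Fin k → ℂ // (∑ j, ξ j ^ 2) ≠ 0} := by
  intro hsc
  set U := {ξ : Fin k → ℂ | (∑ j, ξ j ^ 2) ≠ 0}
  have hUo : IsOpen U := isOpen_ne_fun (by fun_prop) continuous_const
  obtain ⟨L, hLc, hL⟩ := exists_continuousOn_eqOn_exp_comp (U := U) hsc hUo
    (g := fun ξ ↦ ∑ j, ξ j ^ 2) (by fun_prop) (by simp [U])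
  let e₁ : ℂ → Fin k → ℂ := fun z ↦ Pi.single ⟨0, hk⟩ z
  have hsq (z : ℂ) : ∑ j, e₁ z j ^ 2 = z ^ 2 := by
    simp [e₁, Pi.single_apply, ite_pow]
  have he₁U : MapsTo e₁ {0}ᶜ U := fun z hz ↦ by simpa [U, hsq] using hz
  refine not_exists_continuousOn_exp_eq_pow two_ne_zero
    ⟨L ∘ e₁, hLc.comp (continuous_single (A := fun _ ↦ ℂ) _).continuousOn he₁U, fun z hz ↦ ?_⟩
  simpa [hsq] using hL (he₁U hz)
end

section
/- For every k ≥ 1, the subspace Q_k ∖ (H ∪ H′) = {[z] ∈ ℙ(ℂ^{k+2}) : z₁² + ⋯ + z_{k+2}² = 0 and z₁² + z₂² ≠ 0} of complex projective space (with the subspace topology) is not simply connected. -/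
/-!
The ratio `(z₁ + i z₂) / (z₁ - i z₂)` of the linear forms cutting out `H'` and `H` is a continuous
map from `Q_k ∖ (H ∪ H')` to `ℂ ∖ {0}`. Since `k ≥ 1` there is room for a third coordinate, so
`θ ↦ [cos θ : sin θ : i : 0 : … : 0]` is a loop in `Q_k ∖ (H ∪ H')`, and on it the ratio is
`e^{2iθ}`, a loop of winding number `2` around `0`. Lifting through the covering `exp : ℂ → ℂ ∖ {0}`
shows that this loop is not null-homotopic, so neither is the loop in the quadric.
-/

/-- Complex projective space `ℙ(ℂ^n)` carries the quotient topology coming from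
`ℂ^n ∖ {0}`. -/
instance (n : ℕ) : TopologicalSpace (Projectivization ℂ (Fin n → ℂ)) :=
  inferInstanceAs (TopologicalSpace (Quotient (projectivizationSetoid ℂ (Fin n → ℂ))))

open Complex Topology
open scoped Real

noncomputable def expLoop (n : ℤ) : C(unitInterval, {z : ℂ // z ≠ 0}) :=
  ⟨fun t => ⟨exp (2 * π * I * n * (t : ℝ)), exp_ne_zero _⟩, by fun_prop⟩

theorem expLoop_not_homotopicRel_const {n : ℤ} (hn : n ≠ 0) :
    ¬ (expLoop n).HomotopicRel (.const unitInterval ⟨1, one_ne_zero⟩) {0, 1} := by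
  intro h
  let Γ : C(unitInterval, ℂ) := ⟨fun t => 2 * π * I * n * (t : ℝ), by fun_prop⟩
  -- `Γ` and `0` lift both loops through `exp` from `0`, so the homotopy lifts and forces `Γ 1 = 0`
  have hΓ : Γ.HomotopicRel (.const unitInterval 0) {0, 1} := by
    refine (isCoveringMap_exp.homotopicRel_iff_comp ⟨0, by simp, by simp [Γ]⟩).mpr ?_
    convert h using 1 <;> ext t <;> simp [expLoop, Γ]
  simpa [Γ, Real.pi_ne_zero, hn] using hΓ.fst_eq_snd (x := 1) (by simp)

theorem SimplyConnectedSpace.homotopicRel_comp_const {X Y : Type*} [TopologicalSpace X]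
    [TopologicalSpace Y] [SimplyConnectedSpace X] {x : X} (γ : Path x x) (g : C(X, Y)) :
    (g.comp γ.toContinuousMap).HomotopicRel (.const unitInterval (g x)) {0, 1} :=
  (SimplyConnectedSpace.paths_homotopic γ (.refl x)).map g

theorem Topology.IsQuotientMap.continuousOn_of_comp {X Y Z : Type*} [TopologicalSpace X]
    [TopologicalSpace Y] [TopologicalSpace Z] {q : X → Y} (hq : IsQuotientMap q) {U : Set Y}
    (hU : IsOpen U) {f : Y → Z} (hf : ContinuousOn (f ∘ q) (q ⁻¹' U)) : ContinuousOn f U := by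
  rw [continuousOn_iff_continuous_domRestrict] at hf ⊢
  exact (hq.restrictPreimage_isOpen hU).continuous_iff.mpr hf

namespace Projectivization

theorem rep_mk_eq_zero_iff {K V : Type*} [Field K] [AddCommGroup V] [Module K V]
    {P : V → K} {d : ℕ} (hP : ∀ (a : K) v, P (a • v) = a ^ d * P v) {v : V} (hv : v ≠ 0) :
    P (mk K v hv).rep = 0 ↔ P v = 0 := by
  obtain ⟨a, ha⟩ := exists_smul_eq_mk_rep K v hv
  simp [← ha, Units.smul_def, hP]

theorem isQuotientMap_mk (n : ℕ) :
    IsQuotientMap fun v : {v : Fin n → ℂ // v ≠ 0} => mk ℂ v.1 v.2 :=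
  isQuotientMap_quotient_mk'

end Projectivization

open Projectivization

theorem Complex.sq_add_sq_eq_mul (z w : ℂ) : z ^ 2 + w ^ 2 = (z + w * I) * (z - w * I) := by
  linear_combination w ^ 2 * I_sq

noncomputable def hyperplaneRatio {n : ℕ} (x : Projectivization ℂ (Fin (n + 2) → ℂ)) : ℂ :=
  (x.rep 0 + x.rep 1 * I) / (x.rep 0 - x.rep 1 * I)

theorem hyperplaneRatio_mk {n : ℕ} {v : Fin (n + 2) → ℂ} (hv : v ≠ 0) :
    hyperplaneRatio (mk ℂ v hv) = (v 0 + v 1 * I) / (v 0 - v 1 * I) := by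
  obtain ⟨a, ha⟩ := exists_smul_eq_mk_rep ℂ v hv
  simp only [hyperplaneRatio, ← ha, Pi.smul_apply, Units.smul_def, smul_eq_mul, mul_assoc,
    ← mul_add, ← mul_sub]
  exact mul_div_mul_left _ _ a.ne_zero

theorem continuousOn_hyperplaneRatio (n : ℕ) :
    ContinuousOn (hyperplaneRatio (n := n)) {x | x.rep 0 - x.rep 1 * I ≠ 0} := by
  have hpre : (fun v : {v : Fin (n + 2) → ℂ // v ≠ 0} => mk ℂ v.1 v.2) ⁻¹'
      {x | x.rep 0 - x.rep 1 * I ≠ 0} = {v | v.1 0 - v.1 1 * I ≠ 0} := by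
    ext v
    exact (rep_mk_eq_zero_iff (P := fun w => w 0 - w 1 * I) (d := 1)
      (fun a w => by simp only [Pi.smul_apply, smul_eq_mul]; ring) v.2).not
  have hcoord (j : Fin (n + 2)) : Continuous fun v : {v : Fin (n + 2) → ℂ // v ≠ 0} => v.1 j :=
    (continuous_apply j).comp continuous_subtype_val
  have hnum := (hcoord 0).add ((hcoord 1).mul (continuous_const (y := I)))
  have hden := (hcoord 0).sub ((hcoord 1).mul (continuous_const (y := I)))
  refine (isQuotientMap_mk _).continuousOn_of_comp ?_ ?_
  · rw [← (isQuotientMap_mk _).isOpen_preimage, hpre]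
    exact isOpen_ne_fun hden continuous_const
  · rw [hpre]
    refine ContinuousOn.congr ?_ fun v _ => hyperplaneRatio_mk v.2
    exact hnum.continuousOn.div hden.continuousOn fun v hv => hv

abbrev QuadricMinusHyperplanes (k : ℕ) : Type :=
  {x : Projectivization ℂ (Fin (k + 2) → ℂ) //
    (∑ j, x.rep j ^ 2) = 0 ∧ x.rep 0 ^ 2 + x.rep 1 ^ 2 ≠ 0}

namespace QuadricMinusHyperplanes

theorem hyperplaneForms_ne_zero {k : ℕ} (x : QuadricMinusHyperplanes k) :
    x.1.rep 0 + x.1.rep 1 * I ≠ 0 ∧ x.1.rep 0 - x.1.rep 1 * I ≠ 0 :=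
  mul_ne_zero_iff.mp (sq_add_sq_eq_mul _ _ ▸ x.2.2)

noncomputable def ratio (k : ℕ) : C(QuadricMinusHyperplanes k, {z : ℂ // z ≠ 0}) where
  toFun x := ⟨hyperplaneRatio x.1,
    div_ne_zero (hyperplaneForms_ne_zero x).1 (hyperplaneForms_ne_zero x).2⟩
  continuous_toFun := ((continuousOn_hyperplaneRatio k).comp_continuous continuous_subtype_val
    fun x => (hyperplaneForms_ne_zero x).2).subtype_mk _

end QuadricMinusHyperplanes

noncomputable def quadricVec (m : ℕ) (θ : ℂ) : Fin (m + 3) → ℂ :=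
  Fin.cons (cos θ) (Fin.cons (sin θ) (Pi.single 0 I))

theorem quadricVec_ne_zero (m : ℕ) (θ : ℂ) : quadricVec m θ ≠ 0 := by
  intro h
  have h₂ := congr_fun h (Fin.succ (Fin.succ 0))
  rw [quadricVec, Fin.cons_succ, Fin.cons_succ, Pi.single_eq_same] at h₂
  exact I_ne_zero h₂

theorem sum_quadricVec_sq (m : ℕ) (θ : ℂ) : ∑ j, quadricVec m θ j ^ 2 = 0 := by
  simp only [quadricVec, Fin.sum_univ_succ, Fin.cons_zero, Fin.cons_succ, Pi.single_apply,
    ite_pow, I_sq, ne_eq, OfNat.ofNat_ne_zero, not_false_eq_true, zero_pow, Finset.sum_ite_eq',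
    Finset.mem_univ, ↓reduceIte]
  linear_combination cos_sq_add_sin_sq θ

theorem continuous_quadricVec (m : ℕ) : Continuous (quadricVec m) :=
  continuous_cos.finCons (continuous_sin.finCons continuous_const)

noncomputable def quadricPoint (m : ℕ) (θ : ℂ) : QuadricMinusHyperplanes (m + 1) :=
  ⟨mk ℂ (quadricVec m θ) (quadricVec_ne_zero m θ),
    (rep_mk_eq_zero_iff (P := fun v : Fin (m + 3) → ℂ => ∑ j, v j ^ 2) (d := 2)
      (fun a v => by simp [mul_pow, Finset.mul_sum]) _).mpr (sum_quadricVec_sq m θ),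
    (rep_mk_eq_zero_iff (P := fun v : Fin (m + 3) → ℂ => v 0 ^ 2 + v 1 ^ 2) (d := 2)
      (fun a v => by simp only [Pi.smul_apply, smul_eq_mul]; ring) _).not.mpr
      (by simp [quadricVec, cos_sq_add_sin_sq])⟩

theorem continuous_quadricPoint (m : ℕ) : Continuous (quadricPoint m) :=
  Continuous.subtype_mk ((isQuotientMap_mk _).continuous.comp
    ((continuous_quadricVec m).subtype_mk (quadricVec_ne_zero m))) _

theorem ratio_quadricPoint (m : ℕ) (θ : ℂ) :
    (QuadricMinusHyperplanes.ratio (m + 1) (quadricPoint m θ) : ℂ) = exp (2 * θ * I) := by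
  change hyperplaneRatio (mk ℂ _ _) = _
  rw [hyperplaneRatio_mk, div_eq_iff (by simp [quadricVec, cos_sub_sin_I, exp_ne_zero])]
  simp only [quadricVec, Fin.cons_zero, Fin.cons_one, cos_add_sin_I, cos_sub_sin_I, ← exp_add]
  ring_nf

noncomputable def quadricLoop (m : ℕ) : Path (quadricPoint m 0) (quadricPoint m 0) where
  toFun t := quadricPoint m (2 * π * (t : ℝ))
  continuous_toFun := (continuous_quadricPoint m).comp (by fun_prop)
  source' := by simp
  target' := by simp [quadricPoint, quadricVec]

theorem ratio_comp_quadricLoop (m : ℕ) :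
    (QuadricMinusHyperplanes.ratio (m + 1)).comp (quadricLoop m).toContinuousMap = expLoop 2 := by
  ext t
  simp only [ContinuousMap.comp_apply, quadricLoop, ratio_quadricPoint, expLoop,
    ContinuousMap.coe_mk]
  ring_nf

/-- For every `k ≥ 1`, the subspace
`Q_k ∖ (H ∪ H') = {[z] ∈ ℙ(ℂ^{k+2}) : ∑ zⱼ² = 0 and z₁² + z₂² ≠ 0}` of complex
projective space is not simply connected.  (Both conditions are invariant under
scaling, so testing them on the chosen representative `x.rep` defines the correct
set; note `z₁² + z₂² = (z₁ - i z₂)(z₁ + i z₂)`.) -/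
theorem stmt_5 (k : ℕ) (hk : 1 ≤ k) :
    ¬ SimplyConnectedSpace {x : Projectivization ℂ (Fin (k + 2) → ℂ) //
        (∑ j, x.rep j ^ 2) = 0 ∧ x.rep 0 ^ 2 + x.rep 1 ^ 2 ≠ 0} := by
  obtain ⟨m, rfl⟩ : ∃ m, k = m + 1 := ⟨k - 1, by omega⟩
  intro _
  have hbase : QuadricMinusHyperplanes.ratio (m + 1) (quadricPoint m 0) = ⟨1, one_ne_zero⟩ :=
    Subtype.ext (by simp [ratio_quadricPoint])
  have := SimplyConnectedSpace.homotopicRel_comp_const (quadricLoop m)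
    (QuadricMinusHyperplanes.ratio (m + 1))
  rw [ratio_comp_quadricLoop, hbase] at this
  exact expLoop_not_homotopicRel_const two_ne_zero this
end

section
/- There exist points a, b ∈ S² and a homeomorphism h : Q₂ → S² × S² such that h maps the set Q₂ ∩ (H ∪ H′) = {[z] ∈ Q₂ : z₁² + z₂² = 0} onto ({a, −a} × S²) ∪ (S² × {b, −b}). Consequently Q₂ ∖ (H ∪ H′) is homeomorphic to (S² ∖ {a, −a}) × (S² ∖ {b, −b}). -/
/-- The unit 2-sphere `S² ⊂ ℝ³`. -/
abbrev TwoSphere : Type := Metric.sphere (0 : EuclideanSpace ℝ (Fin 3)) 1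

/-- The quadric `Q₂ = {[z] ∈ ℙ(ℂ⁴) : z₁² + z₂² + z₃² + z₄² = 0}` (scale-invariant
condition tested on the chosen representative). -/
abbrev Qtwo : Type :=
  {x : Projectivization ℂ (Fin 4 → ℂ) // (∑ j, x.rep j ^ 2) = 0}

/-!
In the null coordinates `z₁ ± i z₂`, `z₃ ± i z₄` the quadratic form `∑ zⱼ²` becomes the
determinant of a `2 × 2` matrix `M`, so the points of `Q₂` are the rank-one matrices `M = s tᵀ`
and `[z] ↦ ([s], [t])` is the Segre isomorphism `Q₂ ≅ ℙ¹ × ℙ¹`. Composing with the Hopf map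
`ℙ¹ ≅ S²` gives a bijection `Q₂ → S² × S²`. It needs no choice of `s` and `t`: it is the pair of
Bloch vectors of `M Mᴴ = ‖t‖² s s*` and `Mᵀ M̄ = ‖s‖² t t*`, hence continuous, and it is a
homeomorphism because `Q₂` is compact. Since `z₁² + z₂² = M₁₁ M₂₂ = s₁ t₁ s₂ t₂`, the section by `H ∪ H'` is
sent to the pairs with a pole `±e₁` in one of the two factors.
-/

open Complex ComplexConjugate Matrix
open scoped ComplexOrder

local notation "ℝ³" => EuclideanSpace ℝ (Fin 3)

noncomputable section

def blochVector (G : Matrix (Fin 2) (Fin 2) ℂ) : ℝ³ :=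
  WithLp.toLp 2 ![((G 0 0 - G 1 1) / G.trace).re, 2 * (G 0 1 / G.trace).re,
    2 * (G 0 1 / G.trace).im]

lemma blochVector_smul {c : ℂ} (hc : c ≠ 0) (G : Matrix (Fin 2) (Fin 2) ℂ) :
    blochVector (c • G) = blochVector G := by
  simp only [blochVector, trace_smul, Matrix.smul_apply, smul_eq_mul, ← mul_sub,
    mul_div_mul_left _ _ hc]

lemma Continuous.blochVector {X : Type*} [TopologicalSpace X]
    {G : X → Matrix (Fin 2) (Fin 2) ℂ} (hG : Continuous G) (htr : ∀ x, (G x).trace ≠ 0) :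
    Continuous fun x => blochVector (G x) := by
  have hG' : ∀ i j, Continuous fun x => G x i j := fun i j => hG.matrix_elem i j
  have htr' : Continuous fun x => (G x).trace := hG.matrix_trace
  refine (PiLp.continuous_toLp 2 _).comp (continuous_pi fun i => ?_)
  fin_cases i <;> simp only [Fin.zero_eta, Fin.mk_one, Fin.reduceFinMk, Matrix.cons_val] <;>
    fun_prop (disch := exact htr _)

def hopf (s : Fin 2 → ℂ) : ℝ³ := blochVector (vecMulVec s (star s))

lemma hopf_eq (s : Fin 2 → ℂ) : hopf s = WithLp.toLp 2
    ![(normSq (s 0) - normSq (s 1)) / (normSq (s 0) + normSq (s 1)),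
      2 * (s 0 * conj (s 1)).re / (normSq (s 0) + normSq (s 1)),
      2 * (s 0 * conj (s 1)).im / (normSq (s 0) + normSq (s 1))] := by
  have h : s 0 * conj (s 0) + s 1 * conj (s 1) = ((normSq (s 0) + normSq (s 1) : ℝ) : ℂ) := by
    push_cast [mul_conj]; rfl
  simp only [hopf, blochVector, trace_fin_two, vecMulVec_apply, Pi.star_apply, star_def]
  rw [h, mul_conj, mul_conj, ← ofReal_sub, div_ofReal_re, div_ofReal_re, div_ofReal_im, ofReal_re]
  simp only [mul_div_assoc]

lemma normSq_add_normSq_pos {s : Fin 2 → ℂ} (hs : s ≠ 0) :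
    0 < normSq (s 0) + normSq (s 1) := by
  contrapose! hs
  have h0 : s 0 = 0 := normSq_eq_zero.1 (by linarith [normSq_nonneg (s 0), normSq_nonneg (s 1)])
  have h1 : s 1 = 0 := normSq_eq_zero.1 (by linarith [normSq_nonneg (s 0), normSq_nonneg (s 1)])
  ext i; fin_cases i <;> assumption

lemma norm_hopf {s : Fin 2 → ℂ} (hs : s ≠ 0) : ‖hopf s‖ = 1 := by
  have hn := (normSq_add_normSq_pos hs).ne'
  have key : normSq (s 0 * conj (s 1)) = normSq (s 0) * normSq (s 1) := by
    rw [normSq_mul, normSq_conj]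
  rw [normSq_apply] at key
  rw [hopf_eq, EuclideanSpace.norm_eq, Real.sqrt_eq_one, Fin.sum_univ_three]
  simp only [cons_val_zero, cons_val_one, cons_val_two, head_cons, tail_cons,
    Real.norm_eq_abs, sq_abs]
  field_simp
  linear_combination 4 * key

lemma cross_mul_eq_of_hopf_eq {s s' : Fin 2 → ℂ} (hs : s ≠ 0) (hs' : s' ≠ 0)
    (h : hopf s = hopf s') :
    normSq (s 0) * (normSq (s' 0) + normSq (s' 1)) =
        normSq (s' 0) * (normSq (s 0) + normSq (s 1)) ∧
      s 0 * conj (s 1) * (normSq (s' 0) + normSq (s' 1) : ℝ) =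
        s' 0 * conj (s' 1) * (normSq (s 0) + normSq (s 1) : ℝ) := by
  have hn := (normSq_add_normSq_pos hs).ne'
  have hn' := (normSq_add_normSq_pos hs').ne'
  rw [hopf_eq, hopf_eq] at h
  have h0 := congrArg (· 0) h
  have h1 := congrArg (· 1) h
  have h2 := congrArg (· 2) h
  simp only [cons_val_zero, cons_val_one, cons_val_two, head_cons, tail_cons] at h0 h1 h2
  rw [div_eq_div_iff hn hn'] at h0 h1 h2
  refine ⟨by linarith, Complex.ext ?_ ?_⟩
  · simp only [re_mul_ofReal]; linarith
  · simp only [im_mul_ofReal]; linarith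

/- `hopf s = hopf s'` says that the projections `s s* / ‖s‖²` and `s' s'* / ‖s'‖²` agree;
applying them to `s` gives `s = (⟪s', s⟫ / ‖s'‖²) • s'`. -/
lemma exists_smul_of_hopf_eq {s s' : Fin 2 → ℂ} (hs : s ≠ 0) (hs' : s' ≠ 0)
    (h : hopf s = hopf s') : ∃ l : ℂ, s = l • s' := by
  obtain ⟨h0, h01⟩ := cross_mul_eq_of_hopf_eq hs hs' h
  set n := normSq (s 0) + normSq (s 1)
  set n' := normSq (s' 0) + normSq (s' 1)
  have hn : (n : ℂ) ≠ 0 := ofReal_ne_zero.2 (normSq_add_normSq_pos hs).ne'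
  have hn' : (n' : ℂ) ≠ 0 := ofReal_ne_zero.2 (normSq_add_normSq_pos hs').ne'
  have hN : (n : ℂ) = s 0 * conj (s 0) + s 1 * conj (s 1) := by push_cast [n, mul_conj]; rfl
  have hN' : (n' : ℂ) = s' 0 * conj (s' 0) + s' 1 * conj (s' 1) := by
    push_cast [n', mul_conj]; rfl
  have h00 : s 0 * conj (s 0) * n' = s' 0 * conj (s' 0) * n := by
    rw [mul_conj, mul_conj]; exact_mod_cast h0
  have h10 : conj (s 0) * s 1 * n' = conj (s' 0) * s' 1 * n := by
    simpa [mul_comm] using congrArg conj h01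
  refine ⟨(conj (s' 0) * s 0 + conj (s' 1) * s 1) / n', ?_⟩
  ext i
  fin_cases i <;> simp only [Fin.zero_eta, Fin.mk_one, Pi.smul_apply, smul_eq_mul] <;>
    field_simp <;> refine mul_left_cancel₀ hn ?_
  · linear_combination s 0 * h00 + s 1 * h01 + n' * s 0 * hN
  · linear_combination s 0 * h10 + n * s 1 * hN' - s 1 * h00

lemma ext_fin_three {x y : ℝ³} (h0 : x 0 = y 0) (h1 : x 1 = y 1) (h2 : x 2 = y 2) : x = y := by
  ext i; fin_cases i <;> assumption

lemma exists_hopf_eq_of_norm_eq_one {p : ℝ³} (hp : ‖p‖ = 1) :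
    ∃ s, s ≠ 0 ∧ hopf s = p := by
  have hsum : p 0 ^ 2 + p 1 ^ 2 + p 2 ^ 2 = 1 := by
    rw [EuclideanSpace.norm_eq, Real.sqrt_eq_one, Fin.sum_univ_three] at hp
    simpa only [Real.norm_eq_abs, sq_abs] using hp
  by_cases hp0 : p 0 = -1
  · have hp1 : p 1 = 0 := by nlinarith
    have hp2 : p 2 = 0 := by nlinarith
    refine ⟨![0, 1], by simp, ext_fin_three ?_ ?_ ?_⟩ <;> simp [hopf_eq, hp0, hp1, hp2]
  · have hpos : 0 < 1 + p 0 := lt_of_le_of_ne (by nlinarith) fun h => hp0 (by linarith)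
    -- `b / a` is the conjugate stereographic coordinate of `p` seen from the pole `-e₁`
    set a : ℂ := ((1 + p 0 : ℝ) : ℂ)
    set b : ℂ := p 1 - p 2 * I
    have hab : a * conj b = ((1 + p 0) * p 1 : ℝ) + ((1 + p 0) * p 2 : ℝ) * I := by
      simp only [a, b, map_sub, map_mul, conj_ofReal, conj_I]; push_cast; ring
    have ha : normSq a = (1 + p 0) ^ 2 := by rw [normSq_ofReal]; ring
    have hb : normSq b = p 1 ^ 2 + p 2 ^ 2 := by simp [b, normSq_apply]; ring
    have hn : normSq a + normSq b = 2 * (1 + p 0) := by rw [ha, hb]; linear_combination hsum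
    refine ⟨![a, b], fun h => hpos.ne' (by simpa [a] using congrArg re (congrFun h 0)), ?_⟩
    refine ext_fin_three ?_ ?_ ?_ <;>
      simp only [hopf_eq, PiLp.toLp_apply, cons_val_zero, cons_val_one, head_cons, cons_val_two,
        tail_cons, hn, hab, add_re, add_im, ofReal_re, ofReal_im, re_ofReal_mul, im_ofReal_mul,
        I_re, I_im] <;>
      field_simp
    · rw [ha, hb]; linear_combination -hsum
    · ring
    · ring

lemma hopf_eq_single_iff {s : Fin 2 → ℂ} (hs : s ≠ 0) :
    hopf s = EuclideanSpace.single 0 1 ↔ s 1 = 0 := by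
  have hn := (normSq_add_normSq_pos hs).ne'
  constructor
  · intro h
    have h0 := congrArg (· 0) h
    simp only [hopf_eq, PiLp.toLp_apply, cons_val_zero, PiLp.single_apply,
      if_true, div_eq_one_iff_eq hn] at h0
    exact normSq_eq_zero.1 (by linarith)
  · intro h1
    have h0 : s 0 ≠ 0 := fun h0 => hs (by ext i; fin_cases i <;> assumption)
    refine ext_fin_three ?_ ?_ ?_ <;> simp [hopf_eq, h1, h0]

lemma hopf_eq_neg_single_iff {s : Fin 2 → ℂ} (hs : s ≠ 0) :
    hopf s = -EuclideanSpace.single 0 1 ↔ s 0 = 0 := by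
  have hn := (normSq_add_normSq_pos hs).ne'
  constructor
  · intro h
    have h0 := congrArg (· 0) h
    simp only [hopf_eq, PiLp.toLp_apply, cons_val_zero, PiLp.neg_apply, PiLp.single_apply,
      if_true, div_eq_iff hn] at h0
    exact normSq_eq_zero.1 (by linarith)
  · intro h0
    have h1 : s 1 ≠ 0 := fun h1 => hs (by ext i; fin_cases i <;> assumption)
    refine ext_fin_three ?_ ?_ ?_ <;> simp [hopf_eq, h1, h0]

lemma hopf_eq_single_or_neg_iff {s : Fin 2 → ℂ} (hs : s ≠ 0) :
    (hopf s = EuclideanSpace.single 0 1 ∨ hopf s = -EuclideanSpace.single 0 1) ↔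
      s 0 * s 1 = 0 := by
  rw [hopf_eq_single_iff hs, hopf_eq_neg_single_iff hs, mul_eq_zero, or_comm]

def nullMatrix : (Fin 4 → ℂ) ≃ₗ[ℂ] Matrix (Fin 2) (Fin 2) ℂ where
  toFun z := !![z 0 + I * z 1, z 2 + I * z 3; -z 2 + I * z 3, z 0 - I * z 1]
  invFun M := ![(M 0 0 + M 1 1) / 2, -I * (M 0 0 - M 1 1) / 2, (M 0 1 - M 1 0) / 2,
    -I * (M 0 1 + M 1 0) / 2]
  map_add' z w := by ext i j; fin_cases i <;> fin_cases j <;> simp <;> ring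
  map_smul' c z := by ext i j; fin_cases i <;> fin_cases j <;> simp <;> ring
  left_inv z := by
    ext j; fin_cases j <;> simp <;> ring_nf <;> simp [I_sq]
  right_inv M := by
    ext i j; fin_cases i <;> fin_cases j <;> simp <;> ring_nf <;> simp [I_sq] <;> ring

lemma det_nullMatrix (z : Fin 4 → ℂ) : (nullMatrix z).det = ∑ j, z j ^ 2 := by
  simp [nullMatrix, det_fin_two, Fin.sum_univ_four]
  ring_nf; simp [I_sq]; ring

lemma nullMatrix_zero_zero_mul_one_one (z : Fin 4 → ℂ) :
    nullMatrix z 0 0 * nullMatrix z 1 1 = z 0 ^ 2 + z 1 ^ 2 := by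
  simp [nullMatrix]
  ring_nf; simp [I_sq]

lemma exists_eq_vecMulVec_of_det_eq_zero {K : Type*} [Field K] {M : Matrix (Fin 2) (Fin 2) K}
    (hdet : M.det = 0) (hM : M ≠ 0) : ∃ s t, s ≠ 0 ∧ t ≠ 0 ∧ M = vecMulVec s t := by
  rw [det_fin_two] at hdet
  by_cases h00 : M 0 0 = 0
  · by_cases h01 : M 0 1 = 0
    · refine ⟨![0, 1], M 1, by simp, fun h => hM ?_, ?_⟩ <;>
        ext i j <;> fin_cases i <;> fin_cases j <;> simp_all [vecMulVec_apply]
    · have h10 : M 1 0 = 0 := by simpa [h00, h01] using hdet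
      refine ⟨![1, M 1 1 / M 0 1], M 0, by simp, fun h => h01 (congrFun h 1), ?_⟩
      ext i j; fin_cases i <;> fin_cases j <;> simp [vecMulVec_apply, h00, h10, h01]
  · refine ⟨![1, M 1 0 / M 0 0], M 0, by simp, fun h => h00 (congrFun h 0), ?_⟩
    ext i j; fin_cases i <;> fin_cases j <;> simp [vecMulVec_apply, h00]
    field_simp; linear_combination hdet

lemma exists_nullMatrix_eq_vecMulVec {z : Fin 4 → ℂ} (hz : z ≠ 0) (hq : ∑ j, z j ^ 2 = 0) :
    ∃ s t, s ≠ 0 ∧ t ≠ 0 ∧ nullMatrix z = vecMulVec s t :=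
  exists_eq_vecMulVec_of_det_eq_zero (by rwa [det_nullMatrix]) (by simpa using hz)

/-- For `M` read as a two-qubit state, the Bloch vectors of its two reduced density matrices. -/
def reducedBloch (M : Matrix (Fin 2) (Fin 2) ℂ) : ℝ³ × ℝ³ :=
  (blochVector (M * Mᴴ), blochVector (Mᵀ * Mᵀᴴ))

lemma blochVector_smul_mul_conjTranspose {c : ℂ} (hc : c ≠ 0) (M : Matrix (Fin 2) (Fin 2) ℂ) :
    blochVector (c • M * (c • M)ᴴ) = blochVector (M * Mᴴ) := by
  rw [conjTranspose_smul, smul_mul, Matrix.mul_smul, smul_smul,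
    blochVector_smul (mul_ne_zero hc (star_ne_zero.2 hc))]

lemma reducedBloch_smul {c : ℂ} (hc : c ≠ 0) (M : Matrix (Fin 2) (Fin 2) ℂ) :
    reducedBloch (c • M) = reducedBloch M := by
  simp only [reducedBloch, transpose_smul, blochVector_smul_mul_conjTranspose hc]

lemma blochVector_vecMulVec_mul_conjTranspose (s : Fin 2 → ℂ) {t : Fin 2 → ℂ}
    (ht : t ≠ 0) :
    blochVector (vecMulVec s t * (vecMulVec s t)ᴴ) = hopf s := by
  rw [conjTranspose_vecMulVec, vecMulVec_mul_vecMulVec, vecMulVec_smul, hopf, blochVector_smul]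
  rwa [dotProduct_comm, Ne, dotProduct_star_self_eq_zero]

lemma reducedBloch_vecMulVec {s t : Fin 2 → ℂ} (hs : s ≠ 0) (ht : t ≠ 0) :
    reducedBloch (vecMulVec s t) = (hopf s, hopf t) := by
  rw [reducedBloch, transpose_vecMulVec, blochVector_vecMulVec_mul_conjTranspose s ht,
    blochVector_vecMulVec_mul_conjTranspose t hs]

lemma Continuous.reducedBloch {X : Type*} [TopologicalSpace X]
    {M : X → Matrix (Fin 2) (Fin 2) ℂ} (hM : Continuous M) (h0 : ∀ x, M x ≠ 0) :
    Continuous fun x => _root_.reducedBloch (M x) := by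
  refine .prodMk (.blochVector (by fun_prop) fun x => ?_) (.blochVector (by fun_prop) fun x => ?_)
  · rw [Ne, trace_mul_conjTranspose_self_eq_zero_iff]; exact h0 x
  · rw [Ne, trace_mul_conjTranspose_self_eq_zero_iff, transpose_eq_zero]; exact h0 x

lemma sum_sq_rep_mk_eq_zero_iff {z : Fin 4 → ℂ} (hz : z ≠ 0) :
    ∑ j, (Projectivization.mk ℂ z hz).rep j ^ 2 = 0 ↔ ∑ j, z j ^ 2 = 0 := by
  obtain ⟨a, ha⟩ := Projectivization.exists_smul_eq_mk_rep ℂ z hz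
  simp only [← ha, Units.smul_def, Pi.smul_apply, smul_eq_mul, mul_pow, ← Finset.mul_sum,
    mul_eq_zero, pow_eq_zero_iff two_ne_zero, a.ne_zero, false_or]

instance (n : ℕ) : CompactSpace (Projectivization ℂ (Fin n → ℂ)) := by
  have hS : CompactSpace (Metric.sphere (0 : Fin n → ℂ) 1) :=
    isCompact_iff_compactSpace.1 (isCompact_sphere 0 1)
  have hne : ∀ v : Metric.sphere (0 : Fin n → ℂ) 1, (v : Fin n → ℂ) ≠ 0 := fun v h =>
    by simpa [h] using v.2
  refine Function.Surjective.compactSpace (f := fun v => Projectivization.mk ℂ v.1 (hne v))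
    (continuous_quotient_mk'.comp (continuous_subtype_val.subtype_mk _)) fun x => ?_
  have hx := norm_ne_zero_iff.2 x.rep_nonzero
  refine ⟨⟨((‖x.rep‖⁻¹ : ℝ) : ℂ) • x.rep, by simp [norm_smul, hx]⟩, ?_⟩
  conv_rhs => rw [← x.mk_rep]
  exact (Projectivization.mk_eq_mk_iff' ℂ _ _ _ _).2 ⟨_, rfl⟩

lemma isClosed_setOf_sum_rep_sq_eq_zero :
    IsClosed {x : Projectivization ℂ (Fin 4 → ℂ) | ∑ j, x.rep j ^ 2 = 0} := by
  refine (isQuotientMap_quotient_mk' (s := projectivizationSetoid ℂ _)).isClosed_preimage.1 ?_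
  convert isClosed_eq (f := fun v : {v : Fin 4 → ℂ // v ≠ 0} => ∑ j, v.1 j ^ 2)
    (continuous_finsetSum _ fun j _ => ((continuous_apply j).comp continuous_subtype_val).pow 2)
    continuous_const using 1
  ext v
  exact sum_sq_rep_mk_eq_zero_iff v.2

instance : CompactSpace Qtwo :=
  isCompact_iff_compactSpace.1 isClosed_setOf_sum_rep_sq_eq_zero.isCompact

def projReducedBloch : Projectivization ℂ (Fin 4 → ℂ) → ℝ³ × ℝ³ :=
  Projectivization.lift (fun v => reducedBloch (nullMatrix v)) fun v w t h => by
    have ht : t ≠ 0 := by rintro rfl; exact v.2 (by simpa using h)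
    rw [h, map_smul, reducedBloch_smul ht]

lemma projReducedBloch_mk {z : Fin 4 → ℂ} (hz : z ≠ 0) :
    projReducedBloch (Projectivization.mk ℂ z hz) = reducedBloch (nullMatrix z) := rfl

lemma projReducedBloch_eq (x : Projectivization ℂ (Fin 4 → ℂ)) :
    projReducedBloch x = reducedBloch (nullMatrix x.rep) := by
  conv_lhs => rw [← x.mk_rep]
  rfl

lemma continuous_projReducedBloch : Continuous projReducedBloch :=
  Continuous.quotient_lift ((nullMatrix.toContinuousLinearEquiv.continuous.comp
    continuous_subtype_val).reducedBloch fun v => by simpa using v.2) _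

lemma projReducedBloch_mem_sphere (x : Qtwo) :
    (projReducedBloch x.1).1 ∈ Metric.sphere 0 1 ∧
      (projReducedBloch x.1).2 ∈ Metric.sphere 0 1 := by
  obtain ⟨s, t, hs, ht, h⟩ := exists_nullMatrix_eq_vecMulVec x.1.rep_nonzero x.2
  simp [projReducedBloch_eq, h, reducedBloch_vecMulVec hs ht, norm_hopf hs, norm_hopf ht]

def quadricToSpheres (x : Qtwo) : TwoSphere × TwoSphere :=
  (⟨_, (projReducedBloch_mem_sphere x).1⟩, ⟨_, (projReducedBloch_mem_sphere x).2⟩)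

lemma continuous_quadricToSpheres : Continuous quadricToSpheres := by
  have h : Continuous fun x : Qtwo => projReducedBloch x.1 :=
    continuous_projReducedBloch.comp continuous_subtype_val
  exact (h.fst.subtype_mk _).prodMk (h.snd.subtype_mk _)

lemma quadricToSpheres_injective : Function.Injective quadricToSpheres := by
  intro x y hxy
  obtain ⟨s, t, hs, ht, hx⟩ := exists_nullMatrix_eq_vecMulVec x.1.rep_nonzero x.2
  obtain ⟨s', t', hs', ht', hy⟩ := exists_nullMatrix_eq_vecMulVec y.1.rep_nonzero y.2
  have h : projReducedBloch x.1 = projReducedBloch y.1 :=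
    Prod.ext (congrArg (·.1.1) hxy) (congrArg (·.2.1) hxy)
  rw [projReducedBloch_eq, projReducedBloch_eq, hx, hy, reducedBloch_vecMulVec hs ht,
    reducedBloch_vecMulVec hs' ht', Prod.mk.injEq] at h
  obtain ⟨l, rfl⟩ := exists_smul_of_hopf_eq hs hs' h.1
  obtain ⟨m, rfl⟩ := exists_smul_of_hopf_eq ht ht' h.2
  have hxy' : x.1.rep = (l * m) • y.1.rep := nullMatrix.injective <| by
    rw [map_smul, hx, hy, smul_vecMulVec, vecMulVec_smul, smul_smul]
  apply Subtype.ext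
  rw [← x.1.mk_rep, ← y.1.mk_rep, Projectivization.mk_eq_mk_iff']
  exact ⟨l * m, hxy'.symm⟩

lemma quadricToSpheres_surjective : Function.Surjective quadricToSpheres := by
  rintro ⟨⟨p, hp⟩, ⟨q, hq⟩⟩
  obtain ⟨s, hs, rfl⟩ := exists_hopf_eq_of_norm_eq_one (mem_sphere_zero_iff_norm.1 hp)
  obtain ⟨t, ht, rfl⟩ := exists_hopf_eq_of_norm_eq_one (mem_sphere_zero_iff_norm.1 hq)
  set z := nullMatrix.symm (vecMulVec s t)
  have hz : z ≠ 0 := by simp [z, hs, ht]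
  have hzq : ∑ j, z j ^ 2 = 0 := by
    rw [← det_nullMatrix, LinearEquiv.apply_symm_apply, det_vecMulVec]
  refine ⟨⟨Projectivization.mk ℂ z hz, (sum_sq_rep_mk_eq_zero_iff hz).2 hzq⟩, ?_⟩
  simp [quadricToSpheres, projReducedBloch_mk, z, reducedBloch_vecMulVec hs ht]

def quadricHomeomorph : Qtwo ≃ₜ TwoSphere × TwoSphere :=
  continuous_quadricToSpheres.homeoOfEquivCompactToT2
    (f := .ofBijective _ ⟨quadricToSpheres_injective, quadricToSpheres_surjective⟩)

lemma quadricHomeomorph_apply (x : Qtwo) : quadricHomeomorph x = quadricToSpheres x := rfl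

lemma rep_sq_add_rep_sq_eq_zero_iff (x : Qtwo) :
    x.1.rep 0 ^ 2 + x.1.rep 1 ^ 2 = 0 ↔
      ((((quadricHomeomorph x).1 : ℝ³) = EuclideanSpace.single 0 1 ∨
          ((quadricHomeomorph x).1 : ℝ³) = -EuclideanSpace.single 0 1) ∨
        (((quadricHomeomorph x).2 : ℝ³) = EuclideanSpace.single 0 1 ∨
          ((quadricHomeomorph x).2 : ℝ³) = -EuclideanSpace.single 0 1)) := by
  obtain ⟨s, t, hs, ht, h⟩ := exists_nullMatrix_eq_vecMulVec x.1.rep_nonzero x.2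
  have hx : projReducedBloch x.1 = (hopf s, hopf t) := by
    rw [projReducedBloch_eq, h, reducedBloch_vecMulVec hs ht]
  simp only [quadricHomeomorph_apply, quadricToSpheres, hx, hopf_eq_single_or_neg_iff hs,
    hopf_eq_single_or_neg_iff ht, ← nullMatrix_zero_zero_mul_one_one, h, vecMulVec_apply]
  rw [show s 0 * t 0 * (s 1 * t 1) = s 0 * s 1 * (t 0 * t 1) by ring, mul_eq_zero]

def Homeomorph.subtypeAndEquivSubtypeSubtype {X : Type*} [TopologicalSpace X] (p q : X → Prop) :
    {x // p x ∧ q x} ≃ₜ {y : {x // p x} // q y} where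
  toFun x := ⟨⟨x.1, x.2.1⟩, x.2.2⟩
  invFun y := ⟨y.1.1, y.1.2, y.2⟩
  left_inv _ := rfl
  right_inv _ := rfl

def Homeomorph.subtypeProdEquivProd {X Y : Type*} [TopologicalSpace X] [TopologicalSpace Y]
    (p : X → Prop) (q : Y → Prop) :
    {c : X × Y // p c.1 ∧ q c.2} ≃ₜ {x // p x} × {y // q y} where
  toEquiv := Equiv.subtypeProdEquivProd

end

/-- There are points `a, b ∈ S²` and a homeomorphism
`h : Q₂ → S² × S²` carrying `Q₂ ∩ (H ∪ H') = {[z] ∈ Q₂ : z₁² + z₂² = 0}` onto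
`({a, -a} × S²) ∪ (S² × {b, -b})`; consequently `Q₂ ∖ (H ∪ H')` is homeomorphic
to `(S² ∖ {a, -a}) × (S² ∖ {b, -b})`. -/
theorem stmt_6 :
    ∃ (a b : EuclideanSpace ℝ (Fin 3)), ‖a‖ = 1 ∧ ‖b‖ = 1 ∧
    ∃ h : Qtwo ≃ₜ TwoSphere × TwoSphere,
      (h '' {x : Qtwo | x.1.rep 0 ^ 2 + x.1.rep 1 ^ 2 = 0} =
        ({p : TwoSphere | (p : EuclideanSpace ℝ (Fin 3)) = a ∨
            (p : EuclideanSpace ℝ (Fin 3)) = -a} ×ˢ (Set.univ : Set TwoSphere)) ∪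
        ((Set.univ : Set TwoSphere) ×ˢ {q : TwoSphere |
            (q : EuclideanSpace ℝ (Fin 3)) = b ∨
            (q : EuclideanSpace ℝ (Fin 3)) = -b})) ∧
      Nonempty
        (({x : Projectivization ℂ (Fin 4 → ℂ) //
            (∑ j, x.rep j ^ 2) = 0 ∧ x.rep 0 ^ 2 + x.rep 1 ^ 2 ≠ 0}) ≃ₜ
          ({p : TwoSphere // (p : EuclideanSpace ℝ (Fin 3)) ≠ a ∧
              (p : EuclideanSpace ℝ (Fin 3)) ≠ -a} ×
           {q : TwoSphere // (q : EuclideanSpace ℝ (Fin 3)) ≠ b ∧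
              (q : EuclideanSpace ℝ (Fin 3)) ≠ -b})) := by
  refine ⟨EuclideanSpace.single 0 1, EuclideanSpace.single 0 1, by simp, by simp,
    quadricHomeomorph, ?_, ⟨?_⟩⟩
  · ext y
    simp only [quadricHomeomorph.image_eq_preimage_symm, Set.mem_preimage, Set.mem_ofPred_eq,
      rep_sq_add_rep_sq_eq_zero_iff, Homeomorph.apply_symm_apply, Set.mem_union, Set.mem_prod,
      Set.mem_univ, and_true, true_and]
  · refine (Homeomorph.subtypeAndEquivSubtypeSubtype _ _).trans <|
      (quadricHomeomorph.subtype fun x => ?_).trans (Homeomorph.subtypeProdEquivProd _ _)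
    rw [Ne, rep_sq_add_rep_sq_eq_zero_iff]
    tauto
end
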